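/- arXiv:1805.03351 — 8 statements merged into one kernel-verified Lean document; each statement's English description precedes it below -/
import Mathlib

section
/- Let arccos(3/4) ≤ α < π/2 and define R(β) = (sin(α) + (3/4)·sin(β))/sin(α + β). Then R(0) = 1 and R(β) ≥ 1 for every β ∈ [0, π/2 − α]. -/
open Real

theorem stmt3 (α : ℝ) (h1 : arccos (3 / 4) ≤ α) (h2 : α < π / 2) :
    (sin α + 3 / 4 * sin 0) / sin (α + 0) = 1 ∧
      ∀ β ∈ Set.Icc (0 : ℝ) (π / 2 - α),
        1 ≤ (sin α + 3 / 4 * sin β) / sin (α + β) := by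
  have hpos : (0 : ℝ) < arccos (3 / 4) := by
    have := Real.arccos_pos.mpr (by norm_num : (3 : ℝ) / 4 < 1)
    exact this
  have hα0 : 0 < α := lt_of_lt_of_le hpos h1
  have hsinα : 0 < sin α := Real.sin_pos_of_pos_of_lt_pi hα0
    (lt_trans h2 (by linarith [Real.pi_pos]))
  have hcos : cos α ≤ 3 / 4 := by
    have h34 : cos (arccos (3 / 4)) = 3 / 4 :=
      Real.cos_arccos (by norm_num) (by norm_num)
    calc cos α ≤ cos (arccos (3 / 4)) := by
          apply Real.cos_le_cos_of_nonneg_of_le_pi (Real.arccos_nonneg _) _ h1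
          exact le_of_lt (lt_trans h2 (by linarith [Real.pi_pos]))
      _ = 3 / 4 := h34
  constructor
  · simp [hsinα.ne']
  · intro β hβ
    obtain ⟨hβ0, hβ1⟩ := hβ
    have hsum : 0 < sin (α + β) := by
      apply Real.sin_pos_of_pos_of_lt_pi (by linarith)
      have : α + β ≤ π / 2 := by linarith
      linarith [Real.pi_pos]
    rw [le_div_iff₀ hsum, one_mul]
    have hexp : sin (α + β) = sin α * cos β + cos α * sin β := Real.sin_add α β
    have hsinβ : 0 ≤ sin β := Real.sin_nonneg_of_nonneg_of_le_pi hβ0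
      (by linarith [Real.pi_pos])
    have hcosβ : cos β ≤ 1 := Real.cos_le_one β
    nlinarith [mul_nonneg hsinβ (by linarith : (0:ℝ) ≤ 3/4 - cos α)]
end

section
/- For every real ρ > 1, we have ρ·cos(arccos(3/4) − arcsin(1/ρ)) = (3·√(ρ² − 1) + √7)/4. Moreover, for ρ > 1, (3·√(ρ² − 1) + √7)/4 = 17/4 if and only if ρ = (1/3)·√(305 − 34√7). -/
open Real

theorem stmt5 (ρ : ℝ) (hρ : 1 < ρ) :
    ρ * cos (arccos (3 / 4) - arcsin (1 / ρ)) = (3 * Real.sqrt (ρ ^ 2 - 1) + Real.sqrt 7) / 4 ∧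
      ((3 * Real.sqrt (ρ ^ 2 - 1) + Real.sqrt 7) / 4 = 17 / 4 ↔
        ρ = (1 / 3) * Real.sqrt (305 - 34 * Real.sqrt 7)) := by
  have hρ0 : (0:ℝ) < ρ := lt_trans one_pos hρ
  have hρne : ρ ≠ 0 := ne_of_gt hρ0
  have h7 : Real.sqrt 7 ^ 2 = 7 := Real.sq_sqrt (by norm_num)
  have h7n : 0 ≤ Real.sqrt 7 := Real.sqrt_nonneg 7
  have h7lt : Real.sqrt 7 < 3 := by nlinarith
  have hinv1 : (1:ℝ)/ρ ≤ 1 := by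
    rw [div_le_one hρ0]; linarith
  have hinv0 : (0:ℝ) ≤ 1/ρ := by positivity
  constructor
  · rw [Real.cos_sub, Real.cos_arccos (by norm_num) (by norm_num),
      Real.sin_arccos, Real.cos_arcsin, Real.sin_arcsin (by linarith) hinv1]
    have h1 : Real.sqrt (1 - (3/4:ℝ)^2) = Real.sqrt 7 / 4 := by
      rw [show (1 - (3/4:ℝ)^2) = 7/16 by norm_num,
        show (7/16:ℝ) = 7 / 4^2 by norm_num, Real.sqrt_div' 7 (by norm_num), Real.sqrt_sq (by norm_num : (0:ℝ) ≤ 4)]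
    have h2 : ρ * Real.sqrt (1 - (1/ρ)^2) = Real.sqrt (ρ^2 - 1) := by
      rw [show (ρ^2 - 1) = ρ^2 * (1 - (1/ρ)^2) by field_simp,
        Real.sqrt_mul (sq_nonneg ρ), Real.sqrt_sq hρ0.le]
    have h3 : ρ * (1/ρ) = 1 := by field_simp
    rw [h1]
    linear_combination (3/4) * h2 + (Real.sqrt 7/4) * h3
  · have h305 : (0:ℝ) ≤ 305 - 34 * Real.sqrt 7 := by nlinarith
    have hsq : Real.sqrt (ρ^2 - 1) ^ 2 = ρ^2 - 1 := Real.sq_sqrt (by nlinarith)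
    have hsn : 0 ≤ Real.sqrt (ρ^2 - 1) := Real.sqrt_nonneg _
    constructor
    · intro h
      have hs : Real.sqrt (ρ^2 - 1) = (17 - Real.sqrt 7)/3 := by linarith
      have hρ2 : ρ^2 = (305 - 34 * Real.sqrt 7)/9 := by
        have := hsq
        rw [hs] at this
        nlinarith
      have : ρ = Real.sqrt (ρ^2) := (Real.sqrt_sq hρ0.le).symm
      rw [this, hρ2, show (305 - 34*Real.sqrt 7)/9 = (305 - 34*Real.sqrt 7)/3^2 by norm_num,
        Real.sqrt_div' _ (by norm_num), Real.sqrt_sq (by norm_num : (0:ℝ) ≤ 3)]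
      ring
    · intro h
      have hρ2 : ρ^2 = (305 - 34 * Real.sqrt 7)/9 := by
        rw [h]
        rw [mul_pow, Real.sq_sqrt h305]
        ring
      have hs : Real.sqrt (ρ^2 - 1) = (17 - Real.sqrt 7)/3 := by
        rw [hρ2, show (305 - 34*Real.sqrt 7)/9 - 1 = ((17 - Real.sqrt 7)/3)^2 by nlinarith]
        exact Real.sqrt_sq (by linarith)
      rw [hs]; ring
end

section
/- Let α > 0, let β̄ ≥ 0, γ̄ ≥ 0 satisfy 0 < α + β̄ < π, 0 < 2α + γ̄ < π and sin(β̄) ≠ 0. Set w = sin(α)/sin(α + β̄), y = sin(β̄)/sin(α + β̄), and for real γ define F(γ) = w + (3/4)·y·sin(2α)/sin(2α + γ) + (1/2)·y·sin(γ)/sin(2α + γ). If F has derivative 0 at γ̄, then cos(2α + γ̄) = 2/3. -/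
/-!
Writing `F g = w + y * (3/4 * sin (2α) + 1/2 * sin g) / sin (2α + g)`, the quotient rule together with
`sin (2α + g) * cos g - cos (2α + g) * sin g = sin (2α)` gives
`F' γ = y * sin (2α) * (2 - 3 * cos (2α + γ)) / (4 * sin (2α + γ) ^ 2)`,
and every factor except `2 - 3 * cos (2α + γ)` is nonzero.
-/

open Real

theorem hasDerivAt_add_mul_sin_div_sin_add (p q c x : ℝ) (hx : sin (c + x) ≠ 0) :
    HasDerivAt (fun g => (p + q * sin g) / sin (c + g))
      ((q * sin c - p * cos (c + x)) / sin (c + x) ^ 2) x := by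
  have hden : HasDerivAt (fun g => sin (c + g)) (cos (c + x)) x := by
    simpa using ((hasDerivAt_id x).const_add c).sin
  have hnum : HasDerivAt (fun g => p + q * sin g) (q * cos x) x :=
    ((hasDerivAt_sin x).const_mul q).const_add p
  refine (hnum.div hden hx).congr_deriv ?_
  have hsin_c : sin c = sin (c + x) * cos x - cos (c + x) * sin x := by
    rw [← sin_sub, add_sub_cancel_right]
  rw [hsin_c]
  ring

theorem stmt9_general (α β γ : ℝ) (hα : 0 < α) (hγ : 0 ≤ γ)
    (h1 : 0 < α + β) (h2 : α + β < π) (h3 : 0 < 2 * α + γ) (h4 : 2 * α + γ < π)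
    (hsβ : sin β ≠ 0)
    (hF : HasDerivAt (fun g : ℝ =>
        sin α / sin (α + β)
          + 3 / 4 * (sin β / sin (α + β)) * sin (2 * α) / sin (2 * α + g)
          + 1 / 2 * (sin β / sin (α + β)) * sin g / sin (2 * α + g)) 0 γ) :
    cos (2 * α + γ) = 2 / 3 := by
  set y := sin β / sin (α + β)
  have hy : y ≠ 0 := div_ne_zero hsβ (sin_pos_of_pos_of_lt_pi h1 h2).ne'
  have hs : sin (2 * α + γ) ≠ 0 := (sin_pos_of_pos_of_lt_pi h3 h4).ne'
  have h2α : sin (2 * α) ≠ 0 := (sin_pos_of_pos_of_lt_pi (by linarith) (by linarith)).ne'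
  have hF' := ((hasDerivAt_add_mul_sin_div_sin_add (3 / 4 * sin (2 * α)) (1 / 2) (2 * α) γ hs
    ).const_mul y).const_add (sin α / sin (α + β))
  have hcrit := hF.unique (by convert hF' using 1; funext g; ring)
  have hfactor : y * sin (2 * α) * (2 - 3 * cos (2 * α + γ)) / (4 * sin (2 * α + γ) ^ 2) = 0 := by
    rw [hcrit]; ring
  simp only [div_eq_zero_iff, mul_eq_zero, pow_eq_zero_iff two_ne_zero, four_ne_zero, hy, h2α, hs,
    false_or, or_false] at hfactor
  linarith

theorem stmt9 (α β γ : ℝ) (hα : 0 < α) (hβ : 0 ≤ β) (hγ : 0 ≤ γ)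
    (h1 : 0 < α + β) (h2 : α + β < π) (h3 : 0 < 2 * α + γ) (h4 : 2 * α + γ < π)
    (hsβ : sin β ≠ 0)
    (hF : HasDerivAt (fun g : ℝ =>
        sin α / sin (α + β)
          + 3 / 4 * (sin β / sin (α + β)) * sin (2 * α) / sin (2 * α + g)
          + 1 / 2 * (sin β / sin (α + β)) * sin g / sin (2 * α + g)) 0 γ) :
    cos (2 * α + γ) = 2 / 3 :=
  stmt9_general α β γ hα hγ h1 h2 h3 h4 hsβ hF
end

section
/- Let 0 < α ≤ (1/2)·arccos(2/3). Set γ̄ = arccos(2/3) − 2α and β̄ = arccos((3/4)·cos(γ̄)) − α. Then, with w = sin(α)/sin(α + β̄), y = sin(β̄)/sin(α + β̄), d = y·sin(2α)/sin(2α + γ̄), x = y·sin(γ̄)/sin(2α + γ̄), one has w + (3/4)·d + (1/2)·x = cos(β̄). -/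
/-!
Put `A = α + β` and `C = 2α + γ`, so that `cos A = (3/4) cos γ` and `cos C = 2/3` by the choice
of `β̄` and `γ̄`. Clearing the denominators `sin A sin C`, the claim becomes a trigonometric
identity which follows by expanding `sin α = sin (A - β)` and `sin 2α = sin (C - γ)`.
-/

open Real

lemma sin_arccos_pos {x : ℝ} (h₁ : -1 < x) (h₂ : x < 1) : 0 < sin (arccos x) :=
  sin_pos_of_pos_of_lt_pi (arccos_pos.mpr h₂) (arccos_lt_pi.mpr h₁)

lemma sin_mul_sin_add_eq_cos_mul_sin_mul_sin {a b g : ℝ} (hA : cos (a + b) = 3 / 4 * cos g)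
    (hC : cos (2 * a + g) = 2 / 3) :
    sin a * sin (2 * a + g) + 3 / 4 * (sin b * sin (2 * a)) + 1 / 2 * (sin b * sin g)
      = cos b * (sin (a + b) * sin (2 * a + g)) := by
  have ha : sin a = sin (a + b) * cos b - cos (a + b) * sin b := by
    rw [← sin_sub, add_sub_cancel_right]
  have h2a : sin (2 * a) = sin (2 * a + g) * cos g - cos (2 * a + g) * sin g := by
    rw [← sin_sub, add_sub_cancel_right]
  rw [ha, h2a, hA, hC]
  ring

theorem stmt11_general (α : ℝ) :
    let γ := arccos (2 / 3) - 2 * α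
    let β := arccos (3 / 4 * cos γ) - α
    let w := sin α / sin (α + β)
    let y := sin β / sin (α + β)
    let d := y * sin (2 * α) / sin (2 * α + γ)
    let x := y * sin γ / sin (2 * α + γ)
    w + 3 / 4 * d + 1 / 2 * x = cos β := by
  intro γ β w y d x
  have hA : α + β = arccos (3 / 4 * cos γ) := by ring
  have hC : 2 * α + γ = arccos (2 / 3) := by ring
  have hlo : -1 < 3 / 4 * cos γ := by linarith [neg_one_le_cos γ]
  have hhi : 3 / 4 * cos γ < 1 := by linarith [cos_le_one γ]
  have hsinA : sin (α + β) ≠ 0 := by rw [hA]; exact (sin_arccos_pos hlo hhi).ne'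
  have hsinC : sin (2 * α + γ) ≠ 0 := by
    rw [hC]; exact (sin_arccos_pos (by norm_num) (by norm_num)).ne'
  have key := sin_mul_sin_add_eq_cos_mul_sin_mul_sin
    (by rw [hA, cos_arccos hlo.le hhi.le] : cos (α + β) = 3 / 4 * cos γ)
    (by rw [hC, cos_arccos (by norm_num) (by norm_num)] : cos (2 * α + γ) = 2 / 3)
  calc w + 3 / 4 * d + 1 / 2 * x
      = (sin α * sin (2 * α + γ) + 3 / 4 * (sin β * sin (2 * α)) + 1 / 2 * (sin β * sin γ))
          / (sin (α + β) * sin (2 * α + γ)) := by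
        simp only [w, d, x, y]
        generalize sin (α + β) = S at hsinA ⊢
        generalize sin (2 * α + γ) = T at hsinC ⊢
        field_simp
    _ = cos β := by rw [key, mul_div_cancel_right₀ _ (mul_ne_zero hsinA hsinC)]

theorem stmt11 (α : ℝ) (h1 : 0 < α) (h2 : α ≤ 1 / 2 * arccos (2 / 3)) :
    let γ := arccos (2 / 3) - 2 * α
    let β := arccos (3 / 4 * cos γ) - α
    let w := sin α / sin (α + β)
    let y := sin β / sin (α + β)
    let d := y * sin (2 * α) / sin (2 * α + γ)
    let x := y * sin γ / sin (2 * α + γ)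
    w + 3 / 4 * d + 1 / 2 * x = cos β :=
  stmt11_general α
end

section
/- Let 0 ≤ α < π/2, let 0 ≤ β, γ ≤ π/2 with α > 0, 0 < α + β < π and 0 < 2α + γ < π, and suppose cos(α + β) = (3/4)·cos(γ) and cos(2α + γ) = (2/3)·cos(β). Then sin(β)·sin(γ) < sin(α + β)·sin(2α + γ). -/
/-! Write `u = cos β`, `v = cos γ`. The two equations give `sin² (α + β) = 1 - (9/16) v²` and
`sin² (2α + γ) = 1 - (4/9) u²`, which dominate `sin² γ = 1 - v²` and `sin² β = 1 - u²`, strictly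
as soon as `v ≠ 0`, resp. `u ≠ 0`. Both cannot vanish: `cos β = 0` forces
`cos (α + β) = -sin α sin β ≠ 0`, while `cos γ = 0` forces `cos (α + β) = 0`. -/

open Real

theorem mul_lt_mul_of_abs_le_of_abs_le {R : Type*} [CommRing R] [LinearOrder R] [IsStrictOrderedRing R]
    {a b A B : R} (ha : |a| ≤ A) (hb : |b| ≤ B) (hsin_αγ : 0 < A) (hsin_αβ : 0 < B)
    (hstrict : |a| < A ∨ |b| < B) : a * b < A * B := by
  refine (le_abs_self (a * b)).trans_lt ?_
  rw [abs_mul]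
  rcases hstrict with ha' | hb'
  · rw [mul_comm |a|, mul_comm A]
    exact mul_lt_mul' hb ha' (abs_nonneg a) hsin_αβ
  · exact mul_lt_mul' ha hb' (abs_nonneg b) hsin_αγ

theorem Real.abs_sin_le_of_cos_eq_mul {x y c : ℝ} (hx : 0 ≤ sin x) (hc : c ^ 2 ≤ 1)
    (h : cos x = c * cos y) : |sin y| ≤ sin x := by
  refine abs_le_of_sq_le_sq ?_ hx
  rw [sin_sq, sin_sq, h]
  nlinarith [sq_nonneg (cos y)]

theorem Real.abs_sin_lt_of_cos_eq_mul {x y c : ℝ} (hx : 0 ≤ sin x) (hc : c ^ 2 < 1)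
    (hy : cos y ≠ 0) (h : cos x = c * cos y) : |sin y| < sin x := by
  refine abs_lt_of_sq_lt_sq ?_ hx
  rw [sin_sq, sin_sq, h]
  nlinarith [pow_pos (abs_pos.mpr hy) 2, sq_abs (cos y)]

theorem Real.cos_add_ne_zero_of_cos_eq_zero {α β : ℝ} (hα : 0 < α) (hα' : α < π)
    (hβ : cos β = 0) : cos (α + β) ≠ 0 := by
  have hsinβ : sin β ^ 2 = 1 := by rw [sin_sq, hβ]; norm_num
  rw [cos_add, hβ, mul_zero, zero_sub, neg_ne_zero]
  exact mul_ne_zero (sin_pos_of_pos_of_lt_pi hα hα').ne' fun h ↦ by simp [h] at hsinβ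

theorem stmt14_general (α β γ : ℝ) (hα1 : α < π / 2)
    (hα : 0 < α) (h1 : 0 < α + β) (h2 : α + β < π) (h3 : 0 < 2 * α + γ) (h4 : 2 * α + γ < π)
    (e1 : cos (α + β) = 3 / 4 * cos γ) (e2 : cos (2 * α + γ) = 2 / 3 * cos β) :
    sin β * sin γ < sin (α + β) * sin (2 * α + γ) := by
  have hsin_αγ := sin_pos_of_pos_of_lt_pi h3 h4
  have hsin_αβ := sin_pos_of_pos_of_lt_pi h1 h2
  have hcos : cos β ≠ 0 ∨ cos γ ≠ 0 := by
    by_contra! h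
    exact cos_add_ne_zero_of_cos_eq_zero hα (by linarith [pi_pos]) h.1 (by rw [e1, h.2, mul_zero])
  rw [mul_comm (sin (α + β))]
  refine mul_lt_mul_of_abs_le_of_abs_le (abs_sin_le_of_cos_eq_mul hsin_αγ.le (by norm_num) e2)
    (abs_sin_le_of_cos_eq_mul hsin_αβ.le (by norm_num) e1) hsin_αγ hsin_αβ ?_
  exact hcos.imp (abs_sin_lt_of_cos_eq_mul hsin_αγ.le (by norm_num) · e2)
    (abs_sin_lt_of_cos_eq_mul hsin_αβ.le (by norm_num) · e1)

theorem stmt14 (α β γ : ℝ) (hα0 : 0 ≤ α) (hα1 : α < π / 2)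
    (hβ0 : 0 ≤ β) (hβ1 : β ≤ π / 2) (hγ0 : 0 ≤ γ) (hγ1 : γ ≤ π / 2)
    (hα : 0 < α) (h1 : 0 < α + β) (h2 : α + β < π) (h3 : 0 < 2 * α + γ) (h4 : 2 * α + γ < π)
    (e1 : cos (α + β) = 3 / 4 * cos γ) (e2 : cos (2 * α + γ) = 2 / 3 * cos β) :
    sin β * sin γ < sin (α + β) * sin (2 * α + γ) :=
  stmt14_general α β γ hα1 hα h1 h2 h3 h4 e1 e2
end

section
/- Define, for 0 < α < 1/2, v(α) = (2cos(α) − cos(2α))/sin(2α), β̄(α) = arctan((−v(α) + √(v(α)² − ((9/4)cos²(α) − 1)·(5/4 − v(α)²)))/((9/4)cos²(α) − 1)), and γ̄(α) = arccos((4/3)·cos(α + β̄(α))). Then (π/2 − β̄(α))/α → 5 and (π/2 − γ̄(α))/α → 16/3 as α → 0⁺. -/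
open Real Filter Topology

noncomputable def vOpt (α : ℝ) : ℝ := (2 * Real.cos α - Real.cos (2 * α)) / Real.sin (2 * α)

noncomputable def betaOpt (α : ℝ) : ℝ :=
  Real.arctan ((-vOpt α + Real.sqrt ((vOpt α) ^ 2 -
      (9 / 4 * (Real.cos α) ^ 2 - 1) * (5 / 4 - (vOpt α) ^ 2))) /
    (9 / 4 * (Real.cos α) ^ 2 - 1))

noncomputable def gammaOpt (α : ℝ) : ℝ := Real.arccos (4 / 3 * Real.cos (α + betaOpt α))

/-- The argument of the arctan in `betaOpt`. -/
noncomputable def Aarg (α : ℝ) : ℝ :=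
  (-vOpt α + Real.sqrt ((vOpt α) ^ 2 -
      (9 / 4 * (Real.cos α) ^ 2 - 1) * (5 / 4 - (vOpt α) ^ 2))) /
    (9 / 4 * (Real.cos α) ^ 2 - 1)

lemma my_sqrt_pull (α S : ℝ) (hα : 0 ≤ α) : α * Real.sqrt S = Real.sqrt (α ^ 2 * S) := by
  rw [Real.sqrt_mul (sq_nonneg α), Real.sqrt_sq hα]

lemma my_slope_lim {f : ℝ → ℝ} {d : ℝ} (h : HasDerivAt f d 0) (h0 : f 0 = 0) :
    Tendsto (fun x => f x / x) (𝓝[≠] (0:ℝ)) (𝓝 d) := by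
  have h1 := hasDerivAt_iff_tendsto_slope.1 h
  refine h1.congr fun x => ?_
  simp [slope_def_field, h0]

lemma my_sin_div : Tendsto (fun x => Real.sin x / x) (𝓝[≠] (0:ℝ)) (𝓝 1) := by
  have := my_slope_lim (Real.hasDerivAt_sin 0) Real.sin_zero
  simpa using this

lemma my_arctan_div : Tendsto (fun x => Real.arctan x / x) (𝓝[≠] (0:ℝ)) (𝓝 1) := by
  have := my_slope_lim (Real.hasDerivAt_arctan 0) Real.arctan_zero
  simpa using this

lemma my_arcsin_div : Tendsto (fun x => Real.arcsin x / x) (𝓝[≠] (0:ℝ)) (𝓝 1) := by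
  have h := my_slope_lim (Real.hasDerivAt_arcsin (by norm_num : (0:ℝ) ≠ -1)
    (by norm_num : (0:ℝ) ≠ 1)) Real.arcsin_zero
  simpa using h

theorem stmt16 :
    Tendsto (fun α : ℝ => (π / 2 - betaOpt α) / α) (𝓝[>] 0) (𝓝 5) ∧
      Tendsto (fun α : ℝ => (π / 2 - gammaOpt α) / α) (𝓝[>] 0) (𝓝 (16 / 3)) := by
  have hpos : ∀ᶠ α : ℝ in 𝓝[>] 0, 0 < α := self_mem_nhdsWithin
  have hα0 : Tendsto (fun α : ℝ => α) (𝓝[>] 0) (𝓝 0) :=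
    (continuous_id.tendsto 0).mono_left nhdsWithin_le_nhds
  -- sin(2α)/(2α) → 1
  have h2α : Tendsto (fun α : ℝ => 2 * α) (𝓝[>] 0) (𝓝[≠] (0:ℝ)) := by
    rw [tendsto_nhdsWithin_iff]
    constructor
    · simpa using hα0.const_mul 2
    · filter_upwards [hpos] with α hα
      simp only [Set.mem_compl_iff, Set.mem_singleton_iff]
      positivity
  have hsin2 : Tendsto (fun α : ℝ => Real.sin (2 * α) / (2 * α)) (𝓝[>] 0) (𝓝 1) :=
    my_sin_div.comp h2α
  -- α / sin(2α) → 1/2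
  have hdivsin : Tendsto (fun α : ℝ => α / Real.sin (2 * α)) (𝓝[>] 0) (𝓝 (1/2)) := by
    have h := (hsin2.const_mul 2).inv₀ (by norm_num)
    have : (2 * (1:ℝ))⁻¹ = 1/2 := by norm_num
    rw [this] at h
    refine h.congr fun α => ?_
    rw [show 2 * (Real.sin (2*α) / (2*α)) = Real.sin (2*α) / α by
      rw [mul_div_assoc']; exact mul_div_mul_left _ _ (by norm_num), inv_div]
  -- vOpt α * α → 1/2
  have hw : Tendsto (fun α : ℝ => vOpt α * α) (𝓝[>] 0) (𝓝 (1/2)) := by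
    have hc1 : Tendsto (fun α : ℝ => 2 * Real.cos α - Real.cos (2 * α)) (𝓝[>] 0) (𝓝 1) := by
      have hcont : Continuous fun α : ℝ => 2 * Real.cos α - Real.cos (2 * α) := by continuity
      have h := (hcont.tendsto 0).mono_left (nhdsWithin_le_nhds (s := Set.Ioi (0:ℝ)))
      rwa [show (2 * Real.cos 0 - Real.cos (2 * 0) : ℝ) = 1 by norm_num] at h
    have h := hc1.mul hdivsin
    rw [show (1:ℝ) * (1/2) = 1/2 by norm_num] at h
    refine h.congr fun α => ?_
    unfold vOpt; ring
  -- c α := 9/4 cos²α − 1 → 5/4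
  have hc : Tendsto (fun α : ℝ => 9/4 * (Real.cos α)^2 - 1) (𝓝[>] 0) (𝓝 (5/4)) := by
    have hcont : Continuous fun α : ℝ => 9/4 * (Real.cos α)^2 - 1 := by continuity
    have h := (hcont.tendsto 0).mono_left (nhdsWithin_le_nhds (s := Set.Ioi (0:ℝ)))
    rwa [show (9/4 * (Real.cos 0)^2 - 1 : ℝ) = 5/4 by norm_num] at h
  -- Aarg α * α → 1/5
  have hA : Tendsto (fun α : ℝ => Aarg α * α) (𝓝[>] 0) (𝓝 (1/5)) := by
    have hinner : Tendsto (fun α : ℝ =>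
        (vOpt α * α)^2 - (9/4 * (Real.cos α)^2 - 1) * (5/4 * α^2 - (vOpt α * α)^2))
        (𝓝[>] 0) (𝓝 (9/16)) := by
      have h := (hw.pow 2).sub (hc.mul (((hα0.pow 2).const_mul (5/4)).sub (hw.pow 2)))
      rwa [show ((1/2:ℝ))^2 - 5/4 * (5/4 * 0^2 - (1/2)^2) = 9/16 by norm_num] at h
    have hsqrt : Tendsto (fun α : ℝ => Real.sqrt
        ((vOpt α * α)^2 - (9/4 * (Real.cos α)^2 - 1) * (5/4 * α^2 - (vOpt α * α)^2)))
        (𝓝[>] 0) (𝓝 (3/4)) := by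
      have h := (Real.continuous_sqrt.tendsto (9/16)).comp hinner
      rwa [show Real.sqrt (9/16) = 3/4 by
        rw [show (9/16:ℝ) = (3/4)^2 by norm_num, Real.sqrt_sq (by norm_num)]] at h
    have h := (hw.neg.add hsqrt).div hc (by norm_num)
    rw [show (-(1/2) + 3/4) / (5/4 : ℝ) = 1/5 by norm_num] at h
    refine h.congr' ?_
    filter_upwards [hpos] with α hα
    have hsq : Real.sqrt ((vOpt α * α)^2 -
        (9/4 * (Real.cos α)^2 - 1) * (5/4 * α^2 - (vOpt α * α)^2)) =
        α * Real.sqrt ((vOpt α)^2 - (9/4 * (Real.cos α)^2 - 1) * (5/4 - (vOpt α)^2)) := by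
      rw [my_sqrt_pull α _ hα.le]
      congr 1
      ring
    simp only [Pi.div_apply]
    unfold Aarg
    rw [hsq]
    ring_nf
  -- eventually Aarg α > 0
  have hApos : ∀ᶠ α : ℝ in 𝓝[>] 0, 0 < Aarg α := by
    filter_upwards [hpos, hA.eventually (eventually_gt_nhds (by norm_num : (0:ℝ) < 1/5))]
      with α hα hAα
    rcases mul_pos_iff.1 hAα with ⟨h, _⟩ | ⟨_, h⟩
    · exact h
    · linarith
  -- (Aarg α)⁻¹ / α → 5
  have hAinv : Tendsto (fun α : ℝ => (Aarg α)⁻¹ / α) (𝓝[>] 0) (𝓝 5) := by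
    have h := hA.inv₀ (by norm_num)
    rw [show ((1:ℝ)/5)⁻¹ = 5 by norm_num] at h
    refine h.congr fun α => ?_
    rw [mul_inv, div_eq_mul_inv]
  -- (Aarg α)⁻¹ → 0
  have hAinv0 : Tendsto (fun α : ℝ => (Aarg α)⁻¹) (𝓝[>] 0) (𝓝 0) := by
    have h := hAinv.mul hα0
    rw [mul_zero] at h
    refine h.congr' ?_
    filter_upwards [hpos] with α hα
    exact div_mul_cancel₀ _ hα.ne'
  have hAinvW : Tendsto (fun α : ℝ => (Aarg α)⁻¹) (𝓝[>] 0) (𝓝[≠] (0:ℝ)) := by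
    rw [tendsto_nhdsWithin_iff]
    refine ⟨hAinv0, ?_⟩
    filter_upwards [hApos] with α hα
    simp only [Set.mem_compl_iff, Set.mem_singleton_iff]
    positivity
  have htanA : Tendsto (fun α : ℝ => Real.arctan ((Aarg α)⁻¹) / (Aarg α)⁻¹)
      (𝓝[>] 0) (𝓝 1) := my_arctan_div.comp hAinvW
  -- first limit
  have hfirst : Tendsto (fun α : ℝ => (π / 2 - betaOpt α) / α) (𝓝[>] 0) (𝓝 5) := by
    have h := htanA.mul hAinv
    rw [one_mul] at h
    refine h.congr' ?_
    filter_upwards [hApos] with α hA0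
    have hne : (Aarg α)⁻¹ ≠ 0 := inv_ne_zero hA0.ne'
    have hbeta : π / 2 - betaOpt α = Real.arctan ((Aarg α)⁻¹) :=
      (Real.arctan_inv_of_pos hA0).symm
    rw [hbeta, div_mul_div_comm, mul_comm (Real.arctan (Aarg α)⁻¹) ((Aarg α)⁻¹),
      mul_div_mul_left _ _ hne]
  refine ⟨hfirst, ?_⟩
  -- t α := (π/2 − betaOpt α) − α
  have ht : Tendsto (fun α : ℝ => ((π / 2 - betaOpt α) - α) / α) (𝓝[>] 0) (𝓝 4) := by
    have h := hfirst.sub (tendsto_const_nhds (x := (1:ℝ)) (f := 𝓝[>] (0:ℝ)))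
    rw [show (5:ℝ) - 1 = 4 by norm_num] at h
    refine h.congr' ?_
    filter_upwards [hpos] with α hα
    conv_rhs => rw [sub_div]
    rw [div_self hα.ne']
  have ht0 : Tendsto (fun α : ℝ => (π / 2 - betaOpt α) - α) (𝓝[>] 0) (𝓝 0) := by
    have h := ht.mul hα0
    rw [mul_zero] at h
    refine h.congr' ?_
    filter_upwards [hpos] with α hα
    exact div_mul_cancel₀ _ hα.ne'
  have htpos : ∀ᶠ α : ℝ in 𝓝[>] 0, 0 < (π / 2 - betaOpt α) - α := by
    filter_upwards [hpos, ht.eventually (eventually_gt_nhds (by norm_num : (0:ℝ) < 4))]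
      with α hα h4
    rcases div_pos_iff.1 h4 with ⟨h, _⟩ | ⟨_, h⟩
    · exact h
    · linarith
  have htlt : ∀ᶠ α : ℝ in 𝓝[>] 0, (π / 2 - betaOpt α) - α < π :=
    ht0.eventually (eventually_lt_nhds Real.pi_pos)
  have htW : Tendsto (fun α : ℝ => (π / 2 - betaOpt α) - α) (𝓝[>] 0) (𝓝[≠] (0:ℝ)) := by
    rw [tendsto_nhdsWithin_iff]
    refine ⟨ht0, ?_⟩
    filter_upwards [htpos] with α hα
    simp only [Set.mem_compl_iff, Set.mem_singleton_iff]
    exact hα.ne'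
  have hsint : Tendsto (fun α : ℝ =>
      Real.sin ((π / 2 - betaOpt α) - α) / ((π / 2 - betaOpt α) - α)) (𝓝[>] 0) (𝓝 1) :=
    my_sin_div.comp htW
  have hsinpos : ∀ᶠ α : ℝ in 𝓝[>] 0, 0 < Real.sin ((π / 2 - betaOpt α) - α) := by
    filter_upwards [htpos, htlt] with α h1 h2
    exact Real.sin_pos_of_pos_of_lt_pi h1 h2
  -- u α := 4/3 * sin(t α); u/α → 16/3
  have hu : Tendsto (fun α : ℝ => 4/3 * Real.sin ((π / 2 - betaOpt α) - α) / α)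
      (𝓝[>] 0) (𝓝 (16/3)) := by
    have h := (hsint.mul ht).const_mul (4/3 : ℝ)
    rw [show (4/3 : ℝ) * (1 * 4) = 16/3 by norm_num] at h
    refine h.congr' ?_
    filter_upwards [htpos] with α htα
    have hne : (π / 2 - betaOpt α) - α ≠ 0 := htα.ne'
    rw [div_mul_div_comm, mul_comm (Real.sin (π / 2 - betaOpt α - α)) (π / 2 - betaOpt α - α),
      mul_div_mul_left _ _ hne, ← mul_div_assoc]
  have hu0 : Tendsto (fun α : ℝ => 4/3 * Real.sin ((π / 2 - betaOpt α) - α))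
      (𝓝[>] 0) (𝓝 0) := by
    have h := hu.mul hα0
    rw [mul_zero] at h
    refine h.congr' ?_
    filter_upwards [hpos] with α hα
    exact div_mul_cancel₀ _ hα.ne'
  have huW : Tendsto (fun α : ℝ => 4/3 * Real.sin ((π / 2 - betaOpt α) - α))
      (𝓝[>] 0) (𝓝[≠] (0:ℝ)) := by
    rw [tendsto_nhdsWithin_iff]
    refine ⟨hu0, ?_⟩
    filter_upwards [hsinpos] with α hα
    simp only [Set.mem_compl_iff, Set.mem_singleton_iff]
    positivity
  have harc : Tendsto (fun α : ℝ =>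
      Real.arcsin (4/3 * Real.sin ((π / 2 - betaOpt α) - α)) /
        (4/3 * Real.sin ((π / 2 - betaOpt α) - α))) (𝓝[>] 0) (𝓝 1) :=
    my_arcsin_div.comp huW
  have h := harc.mul hu
  rw [one_mul] at h
  refine h.congr' ?_
  filter_upwards [hsinpos] with α hsα
  have hne : 4/3 * Real.sin ((π / 2 - betaOpt α) - α) ≠ 0 := by positivity
  have hcos : 4/3 * Real.cos (α + betaOpt α) = 4/3 * Real.sin ((π / 2 - betaOpt α) - α) := by
    rw [show α + betaOpt α = π/2 - ((π / 2 - betaOpt α) - α) by ring, Real.cos_pi_div_two_sub]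
  have hgamma : π / 2 - gammaOpt α = Real.arcsin (4/3 * Real.sin ((π / 2 - betaOpt α) - α)) := by
    unfold gammaOpt
    rw [hcos, Real.arccos_eq_pi_div_two_sub_arcsin]
    ring
  rw [hgamma, div_mul_div_comm, mul_comm (Real.arcsin _) _, mul_div_mul_left _ _ hne]
end

section
/- Define, for 0 < α < 1/2, v(α) = (2cos(α) − cos(2α))/sin(2α), β̄(α) = arctan((−v(α) + √(v(α)² − ((9/4)cos²(α) − 1)·(5/4 − v(α)²)))/((9/4)cos²(α) − 1)), γ̄(α) = arccos((4/3)·cos(α + β̄(α))), and set w(α) = sin(α)/sin(α + β̄(α)), y(α) = sin(β̄(α))/sin(α + β̄(α)), d(α) = y(α)·sin(2α)/sin(2α + γ̄(α)), x(α) = y(α)·sin(γ̄(α))/sin(2α + γ̄(α)), and C(α) = (3d(α) + 4w(α))/(2·(2 − x(α))·sin(α)). Then C(α) → 5 and (5 − C(α))/sin²(α) → 289/6 as α → 0⁺. -/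
/-!
Multiplying `tan β̄(α)` by `sin α` and dividing `cos γ̄(α)` by `sin α` turns every ingredient of
`C(α)` into an algebraic expression in `sin α`, `cos α` and square roots that stays bounded as
`α → 0⁺`, and `C` is a rational function of these ingredients. Each of them has a two-term
expansion `a + b sin² α + o(sin² α)`, and pushing the expansions through sums, products, quotients
and square roots gives `C = 5 - (289 / 6) sin² α + o(sin² α)`.
-/

open Real Filter Topology

noncomputable def wOpt (α : ℝ) : ℝ := Real.sin α / Real.sin (α + betaOpt α)

noncomputable def yOpt (α : ℝ) : ℝ := Real.sin (betaOpt α) / Real.sin (α + betaOpt α)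

noncomputable def dOpt (α : ℝ) : ℝ :=
  yOpt α * Real.sin (2 * α) / Real.sin (2 * α + gammaOpt α)

noncomputable def xOpt (α : ℝ) : ℝ :=
  yOpt α * Real.sin (gammaOpt α) / Real.sin (2 * α + gammaOpt α)

noncomputable def COpt (α : ℝ) : ℝ :=
  (3 * dOpt α + 4 * wOpt α) / (2 * (2 - xOpt α) * Real.sin α)

/-- `f = a + b ε + o(ε)` along `L`. The limit of `f` is recorded separately, so that the closure
lemmas need no hypothesis on the gauge `ε`. -/
structure HasExpansion (L : Filter ℝ) (ε f : ℝ → ℝ) (a b : ℝ) : Prop where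
  tendsto : Tendsto f L (𝓝 a)
  tendsto_div : Tendsto (fun x => (f x - a) / ε x) L (𝓝 b)

namespace HasExpansion

variable {L : Filter ℝ} {ε f g : ℝ → ℝ} {a b c d : ℝ}

theorem congr_coeffs {a' b' : ℝ} (h : HasExpansion L ε f a b) (ha : a = a') (hb : b = b') :
    HasExpansion L ε f a' b' :=
  ha ▸ hb ▸ h

theorem congr' (h : HasExpansion L ε f a b) (hfg : f =ᶠ[L] g) : HasExpansion L ε g a b where
  tendsto := h.tendsto.congr' hfg
  tendsto_div := h.tendsto_div.congr' <| hfg.mono fun x hx => by rw [hx]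

theorem const (L : Filter ℝ) (ε : ℝ → ℝ) (c : ℝ) : HasExpansion L ε (fun _ => c) c 0 where
  tendsto := tendsto_const_nhds
  tendsto_div := by simpa using tendsto_const_nhds

theorem gauge_mul (hε : Tendsto ε L (𝓝 0)) (hε0 : ∀ᶠ x in L, ε x ≠ 0)
    (hg : Tendsto g L (𝓝 b)) : HasExpansion L ε (fun x => ε x * g x) 0 b where
  tendsto := by simpa using hε.mul hg
  tendsto_div := hg.congr' <| hε0.mono fun x hx => by field_simp; ring

theorem add (hf : HasExpansion L ε f a b) (hg : HasExpansion L ε g c d) :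
    HasExpansion L ε (fun x => f x + g x) (a + c) (b + d) where
  tendsto := hf.tendsto.add hg.tendsto
  tendsto_div := (hf.tendsto_div.add hg.tendsto_div).congr fun x => by ring

theorem sub (hf : HasExpansion L ε f a b) (hg : HasExpansion L ε g c d) :
    HasExpansion L ε (fun x => f x - g x) (a - c) (b - d) where
  tendsto := hf.tendsto.sub hg.tendsto
  tendsto_div := (hf.tendsto_div.sub hg.tendsto_div).congr fun x => by ring

theorem const_mul (k : ℝ) (hf : HasExpansion L ε f a b) :
    HasExpansion L ε (fun x => k * f x) (k * a) (k * b) where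
  tendsto := hf.tendsto.const_mul k
  tendsto_div := (hf.tendsto_div.const_mul k).congr fun x => by ring

theorem mul (hf : HasExpansion L ε f a b) (hg : HasExpansion L ε g c d) :
    HasExpansion L ε (fun x => f x * g x) (a * c) (a * d + b * c) where
  tendsto := hf.tendsto.mul hg.tendsto
  tendsto_div := ((hf.tendsto.mul hg.tendsto_div).add (hf.tendsto_div.mul_const c)).congr
    fun x => by ring

theorem sq (hf : HasExpansion L ε f a b) :
    HasExpansion L ε (fun x => f x ^ 2) (a ^ 2) (2 * a * b) :=
  ((hf.mul hf).congr' (.of_forall fun x => (pow_two (f x)).symm)).congr_coeffs (by ring) (by ring)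

theorem div (hf : HasExpansion L ε f a b) (hg : HasExpansion L ε g c d) (hc : c ≠ 0) :
    HasExpansion L ε (fun x => f x / g x) (a / c) ((b * c - a * d) / c ^ 2) where
  tendsto := hf.tendsto.div hg.tendsto hc
  tendsto_div := by
    rw [_root_.sq]
    refine (((hf.tendsto_div.mul_const c).sub (hg.tendsto_div.const_mul a)).div
      (hg.tendsto.mul_const c) (mul_ne_zero hc hc)).congr' ?_
    filter_upwards [hg.tendsto.eventually_ne hc] with x hx
    simp only [Pi.div_apply]
    field_simp
    ring

theorem sqrt (hf : HasExpansion L ε f (a ^ 2) b) (ha : 0 < a) :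
    HasExpansion L ε (fun x => √(f x)) a (b / (2 * a)) where
  tendsto := by simpa [Real.sqrt_sq ha.le] using hf.tendsto.sqrt
  tendsto_div := by
    have hsqrt : Tendsto (fun x => √(f x)) L (𝓝 a) := by
      simpa [Real.sqrt_sq ha.le] using hf.tendsto.sqrt
    rw [show 2 * a = a + a by ring]
    refine (hf.tendsto_div.div (hsqrt.add_const a) (by positivity)).congr' ?_
    filter_upwards [hf.tendsto.eventually (eventually_gt_nhds (by positivity))] with x hx
    have hs : 0 < √(f x) + a := by positivity
    have hfac : f x - a ^ 2 = (√(f x) - a) * (√(f x) + a) := by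
      nlinarith [Real.mul_self_sqrt hx.le]
    simp only [Pi.div_apply]
    rw [div_right_comm, hfac, mul_div_cancel_right₀ _ hs.ne']

end HasExpansion

namespace COpt

/- With `s = sin α` and `τ = tan β̄(α)`: `P = s v`, `A` is the denominator of `τ` and `R` is
`s` times the square root in `τ`, `T = s τ`, `K = s / cos β̄`, `G = K sin (α + β̄)`,
`U = cos γ̄ / s`, `V = sin γ̄` and `S = sin (2α + γ̄)`. The factors of `s` absorb the blow-up
`β̄ → π / 2`. -/

noncomputable def P (α : ℝ) : ℝ := (2 * cos α - 1 + 2 * sin α ^ 2) / (2 * cos α)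

noncomputable def A (α : ℝ) : ℝ := 9 / 4 * cos α ^ 2 - 1

noncomputable def R (α : ℝ) : ℝ := √(P α ^ 2 - A α * (5 / 4 * sin α ^ 2 - P α ^ 2))

noncomputable def T (α : ℝ) : ℝ := (R α - P α) / A α

noncomputable def K (α : ℝ) : ℝ := √(sin α ^ 2 + T α ^ 2)

noncomputable def G (α : ℝ) : ℝ := sin α ^ 2 + cos α * T α

noncomputable def U (α : ℝ) : ℝ := 4 / 3 * (cos α - T α) / K α

noncomputable def V (α : ℝ) : ℝ := √(1 - sin α ^ 2 * U α ^ 2)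

noncomputable def S (α : ℝ) : ℝ := 2 * cos α * (sin α ^ 2 * U α) + (1 - 2 * sin α ^ 2) * V α

section Trigonometry

variable {α : ℝ}

theorem sin_mul_vOpt (hs : sin α ≠ 0) (hc : cos α ≠ 0) : sin α * vOpt α = P α := by
  rw [vOpt, P, sin_two_mul, cos_two_mul, cos_sq']
  field_simp
  ring

theorem sin_mul_tan_betaOpt (hs : 0 < sin α) (hc : cos α ≠ 0) :
    sin α * tan (betaOpt α) = T α := by
  have hP := sin_mul_vOpt hs.ne' hc
  have hR : sin α * √(vOpt α ^ 2 - A α * (5 / 4 - vOpt α ^ 2)) = R α := by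
    rw [R, ← hP, show (sin α * vOpt α) ^ 2 - A α * (5 / 4 * sin α ^ 2 - (sin α * vOpt α) ^ 2)
      = sin α ^ 2 * (vOpt α ^ 2 - A α * (5 / 4 - vOpt α ^ 2)) by ring,
      sqrt_mul (sq_nonneg _), sqrt_sq hs.le]
  rw [betaOpt, tan_arctan, T, ← hR, ← hP, A]
  ring

theorem K_eq_sin_mul_sqrt (hs : 0 < sin α) (hc : cos α ≠ 0) :
    K α = sin α * √(1 + tan (betaOpt α) ^ 2) := by
  rw [K, ← sin_mul_tan_betaOpt hs hc, show sin α ^ 2 + (sin α * tan (betaOpt α)) ^ 2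
    = sin α ^ 2 * (1 + tan (betaOpt α) ^ 2) by ring, sqrt_mul (sq_nonneg _), sqrt_sq hs.le]

theorem cos_betaOpt (hs : 0 < sin α) (hc : cos α ≠ 0) : cos (betaOpt α) = sin α / K α := by
  obtain ⟨τ, hβ⟩ : ∃ τ, betaOpt α = arctan τ := ⟨_, rfl⟩
  rw [K_eq_sin_mul_sqrt hs hc, hβ, cos_arctan, tan_arctan]
  field_simp

theorem sin_betaOpt (hs : 0 < sin α) (hc : cos α ≠ 0) : sin (betaOpt α) = T α / K α := by
  obtain ⟨τ, hβ⟩ : ∃ τ, betaOpt α = arctan τ := ⟨_, rfl⟩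
  rw [← sin_mul_tan_betaOpt hs hc, K_eq_sin_mul_sqrt hs hc, hβ, sin_arctan, tan_arctan]
  field_simp

theorem gammaOpt_eq (hs : 0 < sin α) (hc : cos α ≠ 0) :
    gammaOpt α = arccos (sin α * U α) := by
  rw [gammaOpt, cos_add, cos_betaOpt hs hc, sin_betaOpt hs hc, U]
  congr 1
  ring

theorem sin_two_mul_add_gammaOpt (hs : 0 < sin α) (hc : cos α ≠ 0)
    (hU : sin α ^ 2 * U α ^ 2 ≤ 1) : sin (2 * α + gammaOpt α) = S α := by
  have hU' : |sin α * U α| ≤ 1 := (sq_le_one_iff_abs_le_one _).mp (by rwa [mul_pow])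
  rw [sin_add, gammaOpt_eq hs hc, cos_arccos (abs_le.mp hU').1 (abs_le.mp hU').2, sin_arccos,
    sin_two_mul, cos_two_mul, cos_sq', S, V, mul_pow]
  ring

theorem COpt_eq (hs : 0 < sin α) (hc : cos α ≠ 0) (hU : sin α ^ 2 * U α ^ 2 ≤ 1)
    (hG : G α ≠ 0) (hS : S α ≠ 0) :
    COpt α = (3 * T α * cos α + 2 * K α * S α) / (2 * G α * S α - T α * V α) := by
  have hK : K α ≠ 0 := by
    rw [K_eq_sin_mul_sqrt hs hc]
    positivity
  have hsin_add : sin (α + betaOpt α) = G α / K α := by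
    rw [sin_add, cos_betaOpt hs hc, sin_betaOpt hs hc, G]
    ring
  have hsin_gamma : sin (gammaOpt α) = V α := by
    rw [gammaOpt_eq hs hc, sin_arccos, V, mul_pow]
  rw [COpt, dOpt, xOpt, wOpt, yOpt, hsin_add, sin_betaOpt hs hc, hsin_gamma,
    sin_two_mul_add_gammaOpt hs hc hU, sin_two_mul]
  field_simp
  ring

end Trigonometry

section Asymptotics

local notation "HasSinSqExpansion" => HasExpansion (𝓝[>] (0 : ℝ)) (fun α : ℝ => sin α ^ 2)

theorem eventually_mem_Ioo_zero_pi_div_two : ∀ᶠ α in 𝓝[>] (0 : ℝ), α ∈ Set.Ioo 0 (π / 2) :=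
  Ioo_mem_nhdsGT (by positivity)

theorem eventually_sin_pos : ∀ᶠ α in 𝓝[>] (0 : ℝ), 0 < sin α :=
  eventually_mem_Ioo_zero_pi_div_two.mono fun _ hα =>
    sin_pos_of_pos_of_lt_pi hα.1 (by linarith [hα.2, pi_pos])

theorem hasExpansion_sin_sq : HasSinSqExpansion (fun α => sin α ^ 2) 0 1 := by
  have hlim : Tendsto (fun α : ℝ => sin α ^ 2) (𝓝[>] 0) (𝓝 0) := by
    simpa using ((continuous_sin.tendsto 0).pow 2).mono_left nhdsWithin_le_nhds
  refine (HasExpansion.gauge_mul hlim ?_ tendsto_const_nhds).congr'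
    (.of_forall fun α => mul_one _)
  exact eventually_sin_pos.mono fun _ h => by positivity

theorem hasExpansion_gauge_mul {g : ℝ → ℝ} {b : ℝ} (hg : Tendsto g (𝓝[>] 0) (𝓝 b)) :
    HasSinSqExpansion (fun α => sin α ^ 2 * g α) 0 b :=
  HasExpansion.gauge_mul hasExpansion_sin_sq.tendsto
    (eventually_sin_pos.mono fun _ h => by positivity) hg

theorem hasExpansion_cos : HasSinSqExpansion cos 1 (-1 / 2) := by
  have h := ((HasExpansion.const _ _ 1).sub hasExpansion_sin_sq).congr_coeffs (a' := 1 ^ 2)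
    (by norm_num) rfl
  refine (h.sqrt one_pos).congr_coeffs rfl (by norm_num) |>.congr' ?_
  filter_upwards [eventually_mem_Ioo_zero_pi_div_two] with α hα
  exact (cos_eq_sqrt_one_sub_sin_sq (by linarith [hα.1, pi_pos]) hα.2.le).symm

theorem hasExpansion_P : HasSinSqExpansion P (1 / 2) (3 / 4) :=
  ((((hasExpansion_cos.const_mul 2).sub (.const _ _ 1)).add
    (hasExpansion_sin_sq.const_mul 2)).div (hasExpansion_cos.const_mul 2)
    (by norm_num)).congr_coeffs (by norm_num) (by norm_num)

theorem hasExpansion_A : HasSinSqExpansion A (5 / 4) (-9 / 4) :=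
  ((hasExpansion_cos.sq.const_mul (9 / 4)).sub (.const _ _ 1)).congr_coeffs
    (by norm_num) (by norm_num)

theorem hasExpansion_R : HasSinSqExpansion R (3 / 4) (-7 / 24) := by
  have h := (hasExpansion_P.sq.sub (hasExpansion_A.mul
    ((hasExpansion_sin_sq.const_mul (5 / 4)).sub hasExpansion_P.sq))).congr_coeffs
    (a' := (3 / 4) ^ 2) (by norm_num) rfl
  exact (h.sqrt (by norm_num)).congr_coeffs rfl (by norm_num)

theorem hasExpansion_T : HasSinSqExpansion T (1 / 5) (-71 / 150) :=
  ((hasExpansion_R.sub hasExpansion_P).div hasExpansion_A (by norm_num)).congr_coeffs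
    (by norm_num) (by norm_num)

theorem hasExpansion_K : HasSinSqExpansion K (1 / 5) (152 / 75) := by
  have h := (hasExpansion_sin_sq.add hasExpansion_T.sq).congr_coeffs (a' := (1 / 5) ^ 2)
    (by norm_num) rfl
  exact (h.sqrt (by norm_num)).congr_coeffs rfl (by norm_num)

theorem hasExpansion_G : HasSinSqExpansion G (1 / 5) (32 / 75) :=
  (hasExpansion_sin_sq.add (hasExpansion_cos.mul hasExpansion_T)).congr_coeffs
    (by norm_num) (by norm_num)

theorem tendsto_U : Tendsto U (𝓝[>] 0) (𝓝 (16 / 3)) :=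
  (((hasExpansion_cos.sub hasExpansion_T).const_mul (4 / 3)).div hasExpansion_K
    (by norm_num)).congr_coeffs (a' := 16 / 3) (by norm_num) rfl |>.tendsto

theorem hasExpansion_V : HasSinSqExpansion V 1 (-128 / 9) := by
  have h := ((HasExpansion.const _ _ 1).sub
    (hasExpansion_gauge_mul (tendsto_U.pow 2))).congr_coeffs (a' := 1 ^ 2) (by norm_num) rfl
  exact (h.sqrt one_pos).congr_coeffs rfl (by norm_num)

theorem hasExpansion_S : HasSinSqExpansion S 1 (-50 / 9) :=
  (((hasExpansion_cos.const_mul 2).mul (hasExpansion_gauge_mul tendsto_U)).add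
    (((HasExpansion.const _ _ 1).sub (hasExpansion_sin_sq.const_mul 2)).mul
      hasExpansion_V)).congr_coeffs (by norm_num) (by norm_num)

theorem hasExpansion_COpt : HasSinSqExpansion COpt 5 (-289 / 6) := by
  have hN := ((hasExpansion_T.const_mul 3).mul hasExpansion_cos).add
    ((hasExpansion_K.const_mul 2).mul hasExpansion_S)
  have hD := ((hasExpansion_G.const_mul 2).mul hasExpansion_S).sub
    (hasExpansion_T.mul hasExpansion_V)
  refine ((hN.div hD (by norm_num)).congr_coeffs (by norm_num) (by norm_num)).congr' ?_
  have hsU := hasExpansion_gauge_mul (tendsto_U.pow 2)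
  filter_upwards [eventually_sin_pos, hasExpansion_cos.tendsto.eventually_ne one_ne_zero,
    hsU.tendsto.eventually (eventually_le_nhds zero_lt_one),
    hasExpansion_G.tendsto.eventually_ne (by norm_num : (1 / 5 : ℝ) ≠ 0),
    hasExpansion_S.tendsto.eventually_ne one_ne_zero] with α hs hc hU hG hS
  exact (COpt_eq hs hc hU hG hS).symm

end Asymptotics

end COpt

theorem stmt17 :
    Tendsto (fun α : ℝ => COpt α) (𝓝[>] 0) (𝓝 5) ∧
      Tendsto (fun α : ℝ => (5 - COpt α) / (Real.sin α) ^ 2) (𝓝[>] 0) (𝓝 (289 / 6)) := by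
  refine ⟨COpt.hasExpansion_COpt.tendsto, ?_⟩
  simpa only [neg_neg, ← neg_div, neg_sub] using COpt.hasExpansion_COpt.tendsto_div.neg
end

section
/- Define, for 0 < α < 1/2, v(α) = (2cos(α) − cos(2α))/sin(2α), β̄(α) = arctan((−v(α) + √(v(α)² − ((9/4)cos²(α) − 1)·(5/4 − v(α)²)))/((9/4)cos²(α) − 1)), γ̄(α) = arccos((4/3)·cos(α + β̄(α))), and set w(α) = sin(α)/sin(α + β̄(α)), y(α) = sin(β̄(α))/sin(α + β̄(α)), d(α) = y(α)·sin(2α)/sin(2α + γ̄(α)), x(α) = y(α)·sin(γ̄(α))/sin(2α + γ̄(α)), and E(α) = (w(α) + d(α))/(1 − x(α)). Then sin(α)·E(α) → 18/79 as α → 0⁺. -/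
open Real Filter Topology

noncomputable def EOpt (α : ℝ) : ℝ := (wOpt α + dOpt α) / (1 - xOpt α)

/-!
As `α → 0⁺` the argument of the arctangent grows like `1 / (5α)`, so `β̄` and `γ̄` tend to `π/2`
with `cos β̄ ~ 5α` and `cos γ̄ = (4/3) cos (α + β̄) ~ (16/3) α`. Hence `w ~ α`, `y → 1`, `d ~ 2α`,
while `1 - x = (sin 2α cos γ̄ + (cos 2α - y) sin γ̄) / sin (2α + γ̄)` vanishes to second order:
`1 - x ~ (2 · 16/3 + 5/2) α² = (79/6) α²`. So `sin α · E ~ α · 3α / ((79/6) α²) = 18/79`.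
-/

lemma tendsto_sin_mul_div_self (c : ℝ) :
    Tendsto (fun x : ℝ => sin (c * x) / x) (𝓝[≠] 0) (𝓝 c) := by
  have hcont : Continuous (fun x : ℝ => c * sinc (c * x)) := by fun_prop
  have h := hcont.tendsto 0
  rw [mul_zero, sinc_zero, mul_one] at h
  refine (h.mono_left nhdsWithin_le_nhds).congr' ?_
  filter_upwards [self_mem_nhdsWithin] with x (hx : x ≠ 0)
  rcases eq_or_ne c 0 with rfl | hc
  · simp
  · rw [sinc_of_ne_zero (mul_ne_zero hc hx)]
    field_simp

lemma tendsto_one_sub_cos_mul_div_sq (c : ℝ) :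
    Tendsto (fun x : ℝ => (1 - cos (c * x)) / x ^ 2) (𝓝[≠] 0) (𝓝 (c ^ 2 / 2)) := by
  have h := ((tendsto_sin_mul_div_self (c / 2)).pow 2).const_mul 2
  convert h using 2 with x
  · rw [show c * x = 2 * (c / 2 * x) by ring, cos_two_mul, cos_sq']
    ring
  · ring

lemma tendsto_cos_two_mul_mul_cos_sub_one_div_sq :
    Tendsto (fun x : ℝ => (cos (2 * x) * cos x - 1) / x ^ 2) (𝓝[≠] 0) (𝓝 (-5 / 2)) := by
  have hcos : Tendsto (fun x : ℝ => cos (2 * x)) (𝓝[≠] 0) (𝓝 1) := by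
    have h := (continuous_cos.comp (continuous_const_mul 2)).continuousWithinAt.tendsto
      (s := {0}ᶜ) (x := 0)
    rwa [Function.comp_apply, mul_zero, cos_zero] at h
  convert ((hcos.mul (tendsto_one_sub_cos_mul_div_sq 1)).add
    (tendsto_one_sub_cos_mul_div_sq 2)).neg using 1
  · ext x
    simp only [one_mul]
    ring
  · norm_num

lemma tendsto_sin_div_self : Tendsto (fun x : ℝ => sin x / x) (𝓝[≠] 0) (𝓝 1) := by
  simpa using tendsto_sin_mul_div_self 1

lemma tendsto_nhdsGT_zero_of_continuous {f : ℝ → ℝ} (hf : Continuous f) :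
    Tendsto f (𝓝[>] 0) (𝓝 (f 0)) :=
  hf.continuousWithinAt.tendsto

lemma tendsto_mul_vOpt : Tendsto (fun α => α * vOpt α) (𝓝[>] 0) (𝓝 (1 / 2)) := by
  have hnum := tendsto_nhdsGT_zero_of_continuous (f := fun α => 2 * cos α - cos (2 * α))
    (by fun_prop)
  have hden := ((tendsto_sin_mul_div_self 2).mono_left (nhdsGT_le_nhdsNE 0)).inv₀ two_ne_zero
  convert hnum.mul hden using 1
  · ext α
    simp only [vOpt, inv_div]
    ring
  · norm_num

lemma tendsto_mul_tan_betaOpt :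
    Tendsto (fun α => α * tan (betaOpt α)) (𝓝[>] 0) (𝓝 (1 / 5)) := by
  have hc := tendsto_nhdsGT_zero_of_continuous (f := fun α => 9 / 4 * cos α ^ 2 - 1) (by fun_prop)
  have hsq := tendsto_nhdsGT_zero_of_continuous (f := fun α : ℝ => α ^ 2) (by fun_prop)
  have hdisc : Tendsto (fun α => α ^ 2 * (vOpt α ^ 2 - (9 / 4 * cos α ^ 2 - 1) *
      (5 / 4 - vOpt α ^ 2))) (𝓝[>] 0) (𝓝 ((3 / 4) ^ 2)) := by
    convert (tendsto_mul_vOpt.pow 2).sub (hc.mul ((hsq.const_mul (5 / 4)).sub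
      (tendsto_mul_vOpt.pow 2))) using 1
    · ext α
      ring
    · norm_num
  have hroot := hdisc.sqrt
  rw [sqrt_sq (by norm_num)] at hroot
  have h := (tendsto_mul_vOpt.neg.add hroot).div hc (by norm_num)
  rw [show (-(1 / 2) + 3 / 4) / (9 / 4 * cos 0 ^ 2 - 1) = (1 / 5 : ℝ) by norm_num] at h
  refine h.congr' ?_
  filter_upwards [self_mem_nhdsWithin] with α (hα : 0 < α)
  rw [Pi.div_apply, betaOpt, tan_arctan, sqrt_mul (sq_nonneg α), sqrt_sq hα.le]
  ring

lemma inv_sqrt_sq_add_mul_sq {α : ℝ} (hα : 0 < α) (t : ℝ) :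
    (√(α ^ 2 + (α * t) ^ 2))⁻¹ = cos (arctan t) / α := by
  rw [cos_arctan, show α ^ 2 + (α * t) ^ 2 = α ^ 2 * (1 + t ^ 2) by ring,
    sqrt_mul (sq_nonneg _), sqrt_sq hα.le]
  field_simp

lemma tendsto_betaOpt : Tendsto betaOpt (𝓝[>] 0) (𝓝 (π / 2)) := by
  have htan : Tendsto (fun α => tan (betaOpt α)) (𝓝[>] 0) atTop := by
    refine (tendsto_mul_tan_betaOpt.pos_mul_atTop (by norm_num) tendsto_inv_nhdsGT_zero).congr' ?_
    filter_upwards [self_mem_nhdsWithin] with α (hα : 0 < α)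
    field_simp
  refine (tendsto_nhds_of_tendsto_nhdsWithin (tendsto_arctan_atTop.comp htan)).congr fun α => ?_
  simp only [Function.comp, betaOpt, tan_arctan]

lemma tendsto_cos_betaOpt_div : Tendsto (fun α => cos (betaOpt α) / α) (𝓝[>] 0) (𝓝 5) := by
  have hsq := tendsto_nhdsGT_zero_of_continuous (f := fun α : ℝ => α ^ 2) (by fun_prop)
  have h := ((hsq.add (tendsto_mul_tan_betaOpt.pow 2)).sqrt).inv₀ (by norm_num)
  rw [show ((0 : ℝ) ^ 2 + (1 / 5) ^ 2) = (5⁻¹) ^ 2 by norm_num, sqrt_sq (by norm_num),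
    inv_inv] at h
  refine h.congr' ?_
  filter_upwards [self_mem_nhdsWithin] with α (hα : 0 < α)
  rw [inv_sqrt_sq_add_mul_sq hα]
  simp only [betaOpt, tan_arctan]

lemma tendsto_sin_betaOpt : Tendsto (fun α => sin (betaOpt α)) (𝓝[>] 0) (𝓝 1) := by
  have h := (continuous_sin.tendsto _).comp tendsto_betaOpt
  rwa [sin_pi_div_two] at h

lemma tendsto_sin_add_betaOpt : Tendsto (fun α => sin (α + betaOpt α)) (𝓝[>] 0) (𝓝 1) := by
  have h := (continuous_sin.tendsto _).comp
    ((tendsto_id.mono_left nhdsWithin_le_nhds).add tendsto_betaOpt)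
  rwa [zero_add, sin_pi_div_two] at h

lemma tendsto_cos_add_betaOpt_div :
    Tendsto (fun α => cos (α + betaOpt α) / α) (𝓝[>] 0) (𝓝 4) := by
  have hcos := tendsto_nhdsGT_zero_of_continuous continuous_cos
  have hsin := tendsto_sin_div_self.mono_left (nhdsGT_le_nhdsNE 0)
  convert (hcos.mul tendsto_cos_betaOpt_div).sub (hsin.mul tendsto_sin_betaOpt) using 1
  · ext α
    rw [cos_add]
    ring
  · norm_num

lemma tendsto_cos_add_betaOpt : Tendsto (fun α => cos (α + betaOpt α)) (𝓝[>] 0) (𝓝 0) := by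
  have h := (continuous_cos.tendsto _).comp
    ((tendsto_id.mono_left nhdsWithin_le_nhds).add tendsto_betaOpt)
  rwa [zero_add, cos_pi_div_two] at h

lemma tendsto_gammaOpt : Tendsto gammaOpt (𝓝[>] 0) (𝓝 (π / 2)) := by
  have h := (continuous_arccos.tendsto _).comp (tendsto_cos_add_betaOpt.const_mul (4 / 3))
  rwa [mul_zero, arccos_zero] at h

lemma tendsto_cos_gammaOpt_div :
    Tendsto (fun α => cos (gammaOpt α) / α) (𝓝[>] 0) (𝓝 (16 / 3)) := by
  have h := tendsto_cos_add_betaOpt_div.const_mul (4 / 3)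
  rw [show (4 / 3 * 4 : ℝ) = 16 / 3 by norm_num] at h
  refine h.congr' ?_
  have hmem := (tendsto_cos_add_betaOpt.const_mul (4 / 3)).eventually
    (Icc_mem_nhds (a := -1) (b := 1) (by norm_num) (by norm_num))
  filter_upwards [hmem] with α ⟨hlo, hhi⟩
  rw [gammaOpt, cos_arccos hlo hhi, mul_div_assoc]

lemma tendsto_sin_two_mul_add_gammaOpt :
    Tendsto (fun α => sin (2 * α + gammaOpt α)) (𝓝[>] 0) (𝓝 1) := by
  have h := (continuous_sin.tendsto _).comp
    (((tendsto_id.mono_left nhdsWithin_le_nhds).const_mul 2).add tendsto_gammaOpt)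
  rwa [mul_zero, zero_add, sin_pi_div_two] at h

lemma tendsto_wOpt_div : Tendsto (fun α => wOpt α / α) (𝓝[>] 0) (𝓝 1) := by
  have hsin := tendsto_sin_div_self.mono_left (nhdsGT_le_nhdsNE 0)
  convert hsin.div tendsto_sin_add_betaOpt one_ne_zero using 1
  · ext α
    simp only [wOpt, Pi.div_apply]
    ring
  · norm_num

lemma tendsto_yOpt : Tendsto yOpt (𝓝[>] 0) (𝓝 1) := by
  have h := tendsto_sin_betaOpt.div tendsto_sin_add_betaOpt one_ne_zero
  rwa [div_one] at h

lemma tendsto_dOpt_div : Tendsto (fun α => dOpt α / α) (𝓝[>] 0) (𝓝 2) := by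
  have hsin := (tendsto_sin_mul_div_self 2).mono_left (nhdsGT_le_nhdsNE 0)
  convert (tendsto_yOpt.mul hsin).div tendsto_sin_two_mul_add_gammaOpt one_ne_zero using 1
  · ext α
    simp only [dOpt, Pi.div_apply]
    ring
  · norm_num

lemma tendsto_cos_two_mul_sub_yOpt_div_sq :
    Tendsto (fun α => (cos (2 * α) - yOpt α) / α ^ 2) (𝓝[>] 0) (𝓝 (5 / 2)) := by
  have hcos := tendsto_nhdsGT_zero_of_continuous (f := fun α => cos (2 * α)) (by fun_prop)
  have hsin := tendsto_sin_div_self.mono_left (nhdsGT_le_nhdsNE 0)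
  have h := (((hcos.mul hsin).mul tendsto_cos_betaOpt_div).add
    ((tendsto_cos_two_mul_mul_cos_sub_one_div_sq.mono_left (nhdsGT_le_nhdsNE 0)).mul
      tendsto_sin_betaOpt)).div tendsto_sin_add_betaOpt one_ne_zero
  rw [show ((cos (2 * 0) * 1 * 5 + -5 / 2 * 1) / 1 : ℝ) = 5 / 2 by norm_num] at h
  refine h.congr' ?_
  filter_upwards [self_mem_nhdsWithin, tendsto_sin_add_betaOpt.eventually_ne one_ne_zero]
    with α (hα : 0 < α) hs
  rw [Pi.div_apply, yOpt]
  field_simp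
  rw [sin_add]
  ring

lemma tendsto_one_sub_xOpt_div_sq :
    Tendsto (fun α => (1 - xOpt α) / α ^ 2) (𝓝[>] 0) (𝓝 (79 / 6)) := by
  have hsin := (tendsto_sin_mul_div_self 2).mono_left (nhdsGT_le_nhdsNE 0)
  have hsinγ := (continuous_sin.tendsto _).comp tendsto_gammaOpt
  rw [sin_pi_div_two] at hsinγ
  have h := ((hsin.mul tendsto_cos_gammaOpt_div).add
    (tendsto_cos_two_mul_sub_yOpt_div_sq.mul hsinγ)).div tendsto_sin_two_mul_add_gammaOpt
    one_ne_zero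
  rw [show ((2 * (16 / 3) + 5 / 2 * 1) / 1 : ℝ) = 79 / 6 by norm_num] at h
  refine h.congr' ?_
  filter_upwards [self_mem_nhdsWithin, tendsto_sin_two_mul_add_gammaOpt.eventually_ne one_ne_zero]
    with α (hα : 0 < α) hs
  rw [Pi.div_apply, Function.comp_apply, xOpt]
  field_simp
  rw [sin_add]
  ring

theorem stmt18 :
    Tendsto (fun α : ℝ => Real.sin α * EOpt α) (𝓝[>] 0) (𝓝 (18 / 79)) := by
  have hsin := tendsto_sin_div_self.mono_left (nhdsGT_le_nhdsNE 0)
  have h := (hsin.mul (tendsto_wOpt_div.add tendsto_dOpt_div)).div tendsto_one_sub_xOpt_div_sq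
    (by norm_num)
  rw [show (1 * (1 + 2) / (79 / 6) : ℝ) = 18 / 79 by norm_num] at h
  refine h.congr' ?_
  filter_upwards [self_mem_nhdsWithin] with α (hα : 0 < α)
  rw [Pi.div_apply, EOpt]
  field_simp
end
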